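/- (Proposition 2, cochain level) Let H be a Hopf algebra over ℂ acting on a unital ℂ-algebra A, i.e. there is a bilinear map H × A → A, (h,a) ↦ h(a), with h¹(h²(a)) = (h¹h²)(a), 1(a) = a, and h(ab) = ∑ h₍₁₎(a) h₍₂₎(b) for all h, h¹, h² ∈ H and a, b ∈ A. Let τ be a ℂ-linear functional on A which is a trace (τ(ab) = τ(ba)) and is δ-invariant: τ(h(a)b) = τ(a S̃(h)(b)) for all a, b ∈ A, h ∈ H. Define γ(h¹ ⊗ … ⊗ hⁿ)(x⁰,…,xⁿ) = τ(x⁰ h¹(x¹) ⋯ hⁿ(xⁿ)). Then γ intertwines the cyclic structures: γ(δᵢ(h¹⊗…⊗h^{n-1})) = δᵢ(γ(h¹⊗…⊗h^{n-1})) for 0 ≤ i ≤ n, γ(σᵢ(h¹⊗…⊗h^{n+1})) = σᵢ(γ(h¹⊗…⊗h^{n+1})) for 0 ≤ i ≤ n, and γ(τₙ(h¹⊗…⊗hⁿ))(x⁰,…,xⁿ) = γ(h¹⊗…⊗hⁿ)(xⁿ,x⁰,…,x^{n-1}). -/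

import Mathlib

/-!
Let `H` be a Hopf algebra over `ℂ` with coproduct `Δ = Coalgebra.comul`, counit
`ε = Coalgebra.counit`, antipode `S = HopfAlgebra.antipode` and unit `1`.  We fix a
character `δ : H →ₐ[ℂ] ℂ`.  The `δ`-twisted antipode is the linear map
`S̃(h) = ∑ δ(h₍₁₎) S(h₍₂₎)`.
-/

open TensorProduct

noncomputable section

variable (H : Type) [Ring H] [HopfAlgebra ℂ H]

/-- The `δ`-twisted antipode `S̃(h) = ∑ δ(h₍₁₎) S(h₍₂₎)`. -/
def twistedAntipode (δ : H →ₐ[ℂ] ℂ) : H →ₗ[ℂ] H :=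
  (TensorProduct.lid ℂ H).toLinearMap ∘ₗ
    (TensorProduct.map δ.toLinearMap (HopfAlgebra.antipode (R := ℂ))) ∘ₗ
      Coalgebra.comul

/-- A type bundled with a `ℂ`-algebra structure (used to form iterated tensor powers). -/
structure AlgPack : Type 1 where
  carrier : Type
  [ring : Ring carrier]
  [alg : Algebra ℂ carrier]

attribute [instance] AlgPack.ring AlgPack.alg

/-- The iterated tensor powers of `H`: `XB H n` bundles `H^{⊗(n+1)}` together with its
(componentwise) algebra structure coming from `Algebra.TensorProduct`. -/
def XB : ℕ → AlgPack
  | 0 => ⟨H⟩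
  | n + 1 => ⟨H ⊗[ℂ] (XB n).carrier⟩

/-- `X H n` is the tensor power `H^{⊗(n+1)}`; its multiplication `*` is the componentwise
product and its unit `1` is `1 ⊗ ... ⊗ 1`. -/
abbrev X (n : ℕ) : Type := (XB H n).carrier

/-- The pure tensor `h 0 ⊗ h 1 ⊗ ... ⊗ h n ∈ H^{⊗(n+1)}`. -/
def tp : ∀ n, (Fin (n + 1) → H) → X H n
  | 0, h => h 0
  | n + 1, h => h 0 ⊗ₜ[ℂ] tp n (Fin.tail h)

/-- The `n`-fold iterated coproduct `Δ⁽ⁿ⁾ : H →ₗ H^{⊗(n+1)}`. -/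
def Δiter : ∀ n, H →ₗ[ℂ] X H n
  | 0 => LinearMap.id
  | n + 1 => (TensorProduct.map LinearMap.id (Δiter n)) ∘ₗ Coalgebra.comul

/-- The face operators `δᵢ : H^{⊗(n+1)} →ₗ H^{⊗(n+2)}` (`0 ≤ i ≤ n + 2`):
`δ₀ = 1 ⊗ ·`, `δⱼ` applies `Δ` to the `j`-th factor for `1 ≤ j ≤ n + 1`, and
`δ_{n+2}` appends `1` on the right. -/
def dX : ℕ → ∀ n, X H n →ₗ[ℂ] X H (n + 1)
  | 0, n => TensorProduct.mk ℂ H (X H n) 1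
  | 1, 0 => (Coalgebra.comul : H →ₗ[ℂ] H ⊗[ℂ] H)
  | 1, n + 1 => (TensorProduct.assoc ℂ H H (X H n)).toLinearMap ∘ₗ
      (TensorProduct.map Coalgebra.comul LinearMap.id)
  | _ + 2, 0 => (TensorProduct.mk ℂ H H).flip 1
  | i + 2, n + 1 => TensorProduct.map LinearMap.id (dX (i + 1) n)

/-- The degeneracy operators `σᵢ : H^{⊗(n+2)} →ₗ H^{⊗(n+1)}` (`0 ≤ i ≤ n + 1`):
`σᵢ` applies the counit `ε` to the `(i+1)`-st factor. -/
def sX : ℕ → ∀ n, X H (n + 1) →ₗ[ℂ] X H n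
  | 0, n => (TensorProduct.lid ℂ (X H n)).toLinearMap ∘ₗ
      TensorProduct.map Coalgebra.counit LinearMap.id
  | _ + 1, 0 => (TensorProduct.rid ℂ H).toLinearMap ∘ₗ
      TensorProduct.map LinearMap.id (Coalgebra.counit : H →ₗ[ℂ] ℂ)
  | i + 1, n + 1 => TensorProduct.map LinearMap.id (sX i n)

/-- Appending `1 ∈ H` on the right: `h¹ ⊗ ... ⊗ h^{n+1} ↦ h¹ ⊗ ... ⊗ h^{n+1} ⊗ 1`. -/
def appOne : ∀ n, X H n →ₗ[ℂ] X H (n + 1)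
  | 0 => (TensorProduct.mk ℂ H H).flip 1
  | n + 1 => TensorProduct.map LinearMap.id (appOne n)

/-- The cyclic operator `τₙ : H^{⊗n} →ₗ H^{⊗n}` (here at index `X H n = H^{⊗(n+1)}`):
`τ(h¹ ⊗ ... ⊗ h^{n+1}) = Δ⁽ⁿ⁾(S̃(h¹)) · (h² ⊗ ... ⊗ h^{n+1} ⊗ 1)`,
where `·` is the componentwise product of `H^{⊗(n+1)}`. -/
def tauX (δ : H →ₐ[ℂ] ℂ) : ∀ n, X H n →ₗ[ℂ] X H n
  | 0 => twistedAntipode H δ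
  | n + 1 => LinearMap.mul' ℂ (X H (n + 1)) ∘ₗ
      TensorProduct.map (Δiter H (n + 1) ∘ₗ twistedAntipode H δ) (appOne H n)


variable (A : Type) [Ring A] [Algebra ℂ A]

/-- The face operators on `(n+1)`-linear forms on `A` (encoded as functions on tuples):
`(δᵢφ)(x⁰,…,xⁿ⁺¹) = φ(x⁰,…,xⁱxⁱ⁺¹,…,xⁿ⁺¹)` for `i ≤ n`, and
`(δ_{n+1}φ)(x⁰,…,xⁿ⁺¹) = φ(xⁿ⁺¹x⁰,x¹,…,xⁿ)`. -/
def dF (n i : ℕ) (φ : (Fin (n + 1) → A) → ℂ) : (Fin (n + 2) → A) → ℂ :=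
  fun x =>
    if i ≤ n then
      φ (fun k => if (k : ℕ) < i then x k.castSucc
                  else if (k : ℕ) = i then x k.castSucc * x k.succ
                  else x k.succ)
    else
      φ (fun k => if (k : ℕ) = 0 then x (Fin.last (n + 1)) * x 0 else x k.castSucc)

/-- The degeneracy operators on forms: `(σⱼφ)(x⁰,…,xⁿ) = φ(x⁰,…,xʲ,1,xʲ⁺¹,…,xⁿ)`. -/
def sF (n j : ℕ) (φ : (Fin (n + 2) → A) → ℂ) : (Fin (n + 1) → A) → ℂ :=
  fun x =>
    φ (fun k => if h : (k : ℕ) ≤ j ∧ (k : ℕ) < n + 1 then x ⟨k, h.2⟩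
                else if (k : ℕ) = j + 1 then 1
                else if h : (k : ℕ) - 1 < n + 1 then x ⟨(k : ℕ) - 1, h⟩ else 1)

/-- The cyclic operator on forms: `(τₙφ)(x⁰,…,xⁿ) = φ(xⁿ,x⁰,…,xⁿ⁻¹)`. -/
def tF (n : ℕ) (φ : (Fin (n + 1) → A) → ℂ) : (Fin (n + 1) → A) → ℂ :=
  fun x => φ (fun k => x (k - 1))

variable (act : H →ₗ[ℂ] A →ₗ[ℂ] A)

/-- Evaluation `evA n x : H^{⊗(n+1)} →ₗ A`,
`h¹ ⊗ ... ⊗ h^{n+1} ↦ h¹(x⁰) · h²(x¹) ⋯ h^{n+1}(xⁿ)`, where `h(a) = act h a`. -/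
def evA : ∀ n, (Fin (n + 1) → A) → (X H n →ₗ[ℂ] A)
  | 0, x => act.flip (x 0)
  | n + 1, x => TensorProduct.lift
      ((LinearMap.mul ℂ A).compl₁₂ (act.flip (x 0)) (evA n (Fin.tail x)))

/-- The characteristic map `γ : H^{⊗(n+1)} →ₗ Cⁿ⁺¹(A)`,
`γ(h¹ ⊗ ... ⊗ hⁿ⁺¹)(x⁰,…,xⁿ⁺¹) = tr(x⁰ · h¹(x¹) ⋯ hⁿ⁺¹(xⁿ⁺¹))`. -/
def gammaMap (tr : A →ₗ[ℂ] ℂ) (n : ℕ) : X H n →ₗ[ℂ] ((Fin (n + 2) → A) → ℂ) where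
  toFun ξ x := tr (x 0 * evA H A act n (Fin.tail x) ξ)
  map_add' ξ η := by funext x; simp [map_add, mul_add]
  map_smul' c ξ := by funext x; simp [map_smul, mul_smul_comm]

/-!
Write `evA x (h¹ ⊗ ⋯ ⊗ hⁿ) = h¹(x¹) ⋯ hⁿ(xⁿ)`, so that `γ(ξ)(x⁰, …, xⁿ) = τ(x⁰ · evA x ξ)`.
Every identity then becomes a statement about `evA`: the Leibniz rule `h(ab) = ∑ h₍₁₎(a) h₍₂₎(b)`
turns a coproduct in slot `i` into the product `xⁱxⁱ⁺¹`, and more generally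
`evA x (Δ⁽ⁿ⁾(k) · η) = k(evA x η)`; the identity `h(1) = ε(h) 1` turns a counit into an inserted
`1`. That identity comes from the antipode and coassociativity:
`h(1) b = ∑ h₍₁₎(1) h₍₂₎(S(h₍₃₎) b) = ∑ h₍₁₎(1 · S(h₍₂₎) b) = ε(h) b`.
For the cyclic operator, `δ`-invariance moves `S̃(h¹)` across the trace,
`τ(x⁰ · S̃(h¹)(y)) = τ(h¹(x⁰) · y)`, and the trace property rotates `xⁿ` to the front.
-/

section Tuples

variable {α : Type*}

def mergeAt [Mul α] (n i : ℕ) (x : Fin (n + 2) → α) : Fin (n + 1) → α :=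
  fun k => if (k : ℕ) < i then x k.castSucc
           else if (k : ℕ) = i then x k.castSucc * x k.succ
           else x k.succ

theorem mergeAt_zero_apply_zero [Mul α] (n : ℕ) (x : Fin (n + 2) → α) :
    mergeAt n 0 x 0 = x 0 * x 1 := by
  simp [mergeAt]

theorem tail_mergeAt_zero [Mul α] (n : ℕ) (x : Fin (n + 3) → α) :
    Fin.tail (mergeAt (n + 1) 0 x) = Fin.tail (Fin.tail x) := by
  funext k
  simp [mergeAt, Fin.tail]

theorem mergeAt_succ [Mul α] (n i : ℕ) (x : Fin (n + 3) → α) :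
    mergeAt (n + 1) (i + 1) x = Fin.cons (x 0) (mergeAt n i (Fin.tail x)) := by
  refine Fin.cases ?_ (fun k => ?_) |> funext
  · simp [mergeAt]
  · simp only [mergeAt, Fin.cons_succ, Fin.tail, Fin.val_succ, Fin.succ_castSucc]
    split_ifs <;> first | rfl | omega

theorem insertNth_succ_eq_cons {n : ℕ} (i : Fin (n + 1)) (y : α) (x : Fin (n + 1) → α) :
    (Fin.insertNth i.succ y x : Fin (n + 2) → α) =
      Fin.cons (x 0) (Fin.insertNth i y (Fin.tail x)) := by
  conv_lhs => rw [← Fin.cons_self_tail x]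
  exact Fin.insertNth_succ_cons i y (x 0) (Fin.tail x)

end Tuples

section FormOperators

variable {α : Type}

theorem dF_of_le [Ring α] {n i : ℕ} (hi : i ≤ n) (φ : (Fin (n + 1) → α) → ℂ)
    (x : Fin (n + 2) → α) : dF α n i φ x = φ (mergeAt n i x) := by
  simp only [dF, if_pos hi]
  rfl

theorem dF_succ [Ring α] (n : ℕ) (φ : (Fin (n + 1) → α) → ℂ) (x : Fin (n + 2) → α) :
    dF α n (n + 1) φ x = φ (Fin.cons (x (Fin.last _) * x 0) (Fin.tail (Fin.init x))) := by
  simp only [dF, Nat.not_succ_le_self, if_false]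
  congr 1
  refine Fin.cases ?_ (fun k => ?_) |> funext <;> simp [Fin.tail, Fin.init]

theorem sF_eq_insertNth [Ring α] {n j : ℕ} (hj : j ≤ n) (φ : (Fin (n + 2) → α) → ℂ)
    (x : Fin (n + 1) → α) :
    sF α n j φ x = φ (Fin.insertNth ⟨j + 1, by omega⟩ 1 x) := by
  simp only [sF]
  congr 1
  funext k
  cases k using Fin.succAboveCases (⟨j + 1, by omega⟩ : Fin (n + 2)) with
  | x => simp
  | p k =>
    rw [Fin.insertNth_apply_succAbove]
    by_cases hk : (k : ℕ) < j + 1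
    · rw [Fin.succAbove_of_castSucc_lt _ _ (by simpa [Fin.lt_def] using hk)]
      simp only [Fin.val_castSucc]
      rw [dif_pos (by omega)]
    · rw [Fin.succAbove_of_le_castSucc _ _ (by simp only [Fin.le_def, Fin.val_castSucc]; omega)]
      simp only [Fin.val_succ]
      rw [dif_neg (by omega), if_neg (by omega), dif_pos (by omega)]
      simp

theorem tF_eq_cons_init (n : ℕ) (φ : (Fin (n + 1) → α) → ℂ) (x : Fin (n + 1) → α) :
    tF α n φ x = φ (Fin.cons (x (Fin.last n)) (Fin.init x)) := by
  simp only [tF]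
  congr 1
  refine Fin.cases ?_ (fun k => ?_) |> funext
  · exact congrArg x (Fin.ext Fin.coe_neg_one)
  · exact congrArg x (Fin.ext (by simp [Fin.coe_sub_one]))

end FormOperators

section ModuleAlgebra
open Coalgebra

variable {H A act}

theorem act_apply_one_mul
    (hact_mul : ∀ h₁ h₂ : H, act (h₁ * h₂) = act h₁ ∘ₗ act h₂)
    (hact_one : act 1 = LinearMap.id)
    (hact_hopf : ∀ (h : H) (a b : A),
      act h (a * b) = TensorProduct.lift
        ((LinearMap.mul ℂ A).compl₁₂ (act.flip a) (act.flip b)) (Coalgebra.comul (R := ℂ) h))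
    (h : H) (b : A) :
    act h 1 * b = counit (R := ℂ) h • b := by
  -- `Ψ (q ⊗ r) = q(S(r) b)` and `L (p ⊗ q ⊗ r) = p(1) · q(S(r) b)`; evaluate `L` on `Δ⁽²⁾ h`
  -- in both bracketings.
  let Ψ : H ⊗[ℂ] H →ₗ[ℂ] A :=
    act.flip b ∘ₗ LinearMap.mul' ℂ H ∘ₗ (HopfAlgebra.antipode ℂ).lTensor H
  let L : H ⊗[ℂ] (H ⊗[ℂ] H) →ₗ[ℂ] A := lift ((LinearMap.mul ℂ A).compl₁₂ (act.flip 1) Ψ)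
  have hΨ (k : H) : Ψ (comul k) = counit (R := ℂ) k • b := by
    simp [Ψ, Algebra.algebraMap_eq_smul_one, hact_one]
  have hL_rTensor :
      L ∘ₗ (TensorProduct.assoc ℂ H H H).toLinearMap ∘ₗ comul.rTensor H = Ψ := by
    ext p r
    have hr : L ∘ₗ (TensorProduct.assoc ℂ H H H).toLinearMap ∘ₗ (TensorProduct.mk ℂ _ _).flip r =
        lift ((LinearMap.mul ℂ A).compl₁₂ (act.flip 1)
          (act.flip (act (HopfAlgebra.antipode ℂ r) b))) := by
      ext p q
      simp [L, Ψ, hact_mul]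
    simpa [Ψ, hact_mul, ← hact_hopf] using LinearMap.congr_fun hr (comul p)
  have hL_lTensor : L ∘ₗ comul.lTensor H = LinearMap.mulRight ℂ b ∘ₗ act.flip 1 ∘ₗ
      (TensorProduct.rid ℂ H).toLinearMap ∘ₗ counit.lTensor H :=
    TensorProduct.ext' fun p q => by simp [L, hΨ]
  calc act h 1 * b = L (comul.lTensor H (comul h)) := by
        rw [← LinearMap.comp_apply L, hL_lTensor]; simp
    _ = L (TensorProduct.assoc ℂ H H H (comul.rTensor H (comul h))) := by rw [coassoc_apply]
    _ = counit (R := ℂ) h • b := by rw [← hΨ, ← hL_rTensor]; rfl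

end ModuleAlgebra

section Evaluation
open Coalgebra

variable {H A act}

theorem X.induction_on {n : ℕ} {P : X H (n + 1) → Prop} (ξ : X H (n + 1)) (zero : P 0)
    (tmul : ∀ (h : H) (η : X H n), P (h ⊗ₜ[ℂ] η)) (add : ∀ η η', P η → P η' → P (η + η')) :
    P ξ :=
  TensorProduct.induction_on ξ zero tmul add

theorem evA_tmul (n : ℕ) (x : Fin (n + 2) → A) (h : H) (ξ : X H n) :
    evA H A act (n + 1) x (h ⊗ₜ ξ) = act h (x 0) * evA H A act n (Fin.tail x) ξ := rfl

theorem evA_dX_zero (hact_one : act 1 = LinearMap.id) (n : ℕ) (x : Fin (n + 2) → A)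
    (ξ : X H n) :
    evA H A act (n + 1) x (dX H 0 n ξ) = x 0 * evA H A act n (Fin.tail x) ξ := by
  change act 1 (x 0) * _ = _
  rw [hact_one, LinearMap.id_apply]

theorem evA_appOne (hact_one : act 1 = LinearMap.id) (n : ℕ) (x : Fin (n + 2) → A)
    (ξ : X H n) :
    evA H A act (n + 1) x (appOne H n ξ) = evA H A act n (Fin.init x) ξ * x (Fin.last _) := by
  induction n with
  | zero =>
    change act ξ (x 0) * act 1 (x 1) = act ξ (x 0) * x 1
    rw [hact_one, LinearMap.id_apply]
  | succ n ih =>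
    induction ξ using X.induction_on with
    | zero => simp
    | tmul h η =>
      rw [show appOne H (n + 1) (h ⊗ₜ η) = h ⊗ₜ appOne H n η from rfl, evA_tmul, ih, evA_tmul,
        ← Fin.tail_init_eq_init_tail, mul_assoc]
      rfl
    | add η η' hη hη' => simp only [map_add, hη, hη', add_mul]

theorem dX_last (n : ℕ) : dX H (n + 2) n = appOne H n := by
  induction n with
  | zero => rfl
  | succ n ih => exact congrArg (TensorProduct.map LinearMap.id) ih

theorem evA_Δiter_mul (hact_mul : ∀ h₁ h₂ : H, act (h₁ * h₂) = act h₁ ∘ₗ act h₂)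
    (hact_hopf : ∀ (h : H) (a b : A),
      act h (a * b) = TensorProduct.lift
        ((LinearMap.mul ℂ A).compl₁₂ (act.flip a) (act.flip b)) (Coalgebra.comul (R := ℂ) h))
    (n : ℕ) (x : Fin (n + 1) → A) (k : H) (η : X H n) :
    evA H A act n x (Δiter H n k * η) = act k (evA H A act n x η) := by
  induction n generalizing k with
  | zero => exact LinearMap.congr_fun (hact_mul k η) (x 0)
  | succ n ih =>
    induction η using X.induction_on with
    | zero => simp
    | tmul h η =>
      have key : evA H A act (n + 1) x ∘ₗ LinearMap.mulRight ℂ (h ⊗ₜ η : X H (n + 1)) ∘ₗ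
          TensorProduct.map LinearMap.id (Δiter H n) = lift ((LinearMap.mul ℂ A).compl₁₂
            (act.flip (act h (x 0))) (act.flip (evA H A act n (Fin.tail x) η))) := by
        refine TensorProduct.ext' fun k₁ k₂ => ?_
        change evA H A act (n + 1) x ((k₁ ⊗ₜ Δiter H n k₂ * h ⊗ₜ η : H ⊗[ℂ] X H n)) = _
        rw [Algebra.TensorProduct.tmul_mul_tmul]
        change act (k₁ * h) (x 0) * evA H A act n (Fin.tail x) (Δiter H n k₂ * η) = _
        rw [ih, hact_mul]
        rfl
      calc _ = lift ((LinearMap.mul ℂ A).compl₁₂ (act.flip (act h (x 0)))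
            (act.flip (evA H A act n (Fin.tail x) η))) (comul k) :=
            LinearMap.congr_fun key (comul k)
        _ = act k (evA H A act (n + 1) x (h ⊗ₜ η)) := (hact_hopf k _ _).symm
    | add η η' hη hη' => rw [mul_add, map_add, map_add, hη, hη', map_add]

theorem evA_comp_assoc (n : ℕ) (x : Fin (n + 3) → A) (ξ : X H n) :
    evA H A act (n + 2) x ∘ₗ (TensorProduct.assoc ℂ H H (X H n)).toLinearMap ∘ₗ
        (TensorProduct.mk ℂ _ _).flip ξ =
      LinearMap.mulRight ℂ (evA H A act n (Fin.tail (Fin.tail x)) ξ) ∘ₗ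
        lift ((LinearMap.mul ℂ A).compl₁₂ (act.flip (x 0)) (act.flip (x 1))) :=
  TensorProduct.ext' fun _ _ => (mul_assoc _ _ _).symm

theorem evA_dX_succ
    (hact_hopf : ∀ (h : H) (a b : A),
      act h (a * b) = TensorProduct.lift
        ((LinearMap.mul ℂ A).compl₁₂ (act.flip a) (act.flip b)) (Coalgebra.comul (R := ℂ) h))
    (n m : ℕ) (hm : m ≤ n) (x : Fin (n + 2) → A) (ξ : X H n) :
    evA H A act (n + 1) x (dX H (m + 1) n ξ) = evA H A act n (mergeAt n m x) ξ := by
  induction n generalizing m with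
  | zero =>
    obtain rfl : m = 0 := by omega
    refine (hact_hopf ξ (x 0) (x 1)).symm.trans ?_
    change act ξ (x 0 * x 1) = act ξ (mergeAt 0 0 x 0)
    rw [mergeAt_zero_apply_zero]
  | succ n ih =>
    induction ξ using X.induction_on with
    | zero => simp only [map_zero]
    | tmul h η =>
      cases m with
      | zero =>
        calc evA H A act (n + 2) x (dX H 1 (n + 1) (h ⊗ₜ η))
            = lift ((LinearMap.mul ℂ A).compl₁₂ (act.flip (x 0)) (act.flip (x 1))) (comul h) *
                evA H A act n (Fin.tail (Fin.tail x)) η :=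
              LinearMap.congr_fun (evA_comp_assoc n x η) (comul h)
          _ = evA H A act (n + 1) (mergeAt (n + 1) 0 x) (h ⊗ₜ η) := by
            rw [evA_tmul, ← hact_hopf, mergeAt_zero_apply_zero, tail_mergeAt_zero]
      | succ m =>
        change act h (x 0) * evA H A act (n + 1) (Fin.tail x) (dX H (m + 1) n η) = _
        rw [ih m (by omega), mergeAt_succ]
        rfl
    | add η η' hη hη' => simp only [map_add, hη, hη']

theorem evA_sX_zero
    (hact_mul : ∀ h₁ h₂ : H, act (h₁ * h₂) = act h₁ ∘ₗ act h₂)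
    (hact_one : act 1 = LinearMap.id)
    (hact_hopf : ∀ (h : H) (a b : A),
      act h (a * b) = TensorProduct.lift
        ((LinearMap.mul ℂ A).compl₁₂ (act.flip a) (act.flip b)) (Coalgebra.comul (R := ℂ) h))
    (n : ℕ) (x : Fin (n + 1) → A) (ξ : X H (n + 1)) :
    evA H A act n x (sX H 0 n ξ) = evA H A act (n + 1) (Fin.cons 1 x) ξ := by
  induction ξ using X.induction_on with
  | zero => simp only [map_zero]
  | tmul h η =>
    change evA H A act n x (TensorProduct.lid ℂ (X H n) (counit h ⊗ₜ η)) = act h 1 * _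
    rw [act_apply_one_mul hact_mul hact_one hact_hopf, TensorProduct.lid_tmul, map_smul]
    rfl
  | add η η' hη hη' => simp only [map_add, hη, hη']

theorem evA_sX
    (hact_mul : ∀ h₁ h₂ : H, act (h₁ * h₂) = act h₁ ∘ₗ act h₂)
    (hact_one : act 1 = LinearMap.id)
    (hact_hopf : ∀ (h : H) (a b : A),
      act h (a * b) = TensorProduct.lift
        ((LinearMap.mul ℂ A).compl₁₂ (act.flip a) (act.flip b)) (Coalgebra.comul (R := ℂ) h))
    (n i : ℕ) (hi : i ≤ n + 1) (x : Fin (n + 1) → A) (ξ : X H (n + 1)) :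
    evA H A act n x (sX H i n ξ) =
      evA H A act (n + 1) (Fin.insertNth ⟨i, by omega⟩ 1 x) ξ := by
  have h_zero n x ξ : evA H A act n x (sX H 0 n ξ) =
      evA H A act (n + 1) (Fin.insertNth 0 1 x) ξ := by
    rw [Fin.insertNth_zero', evA_sX_zero hact_mul hact_one hact_hopf]
  induction n generalizing i with
  | zero =>
    rcases i with _ | _ | i
    · exact h_zero 0 x ξ
    · induction ξ using X.induction_on with
      | zero => simp only [map_zero]
      | tmul h η =>
        -- retype `η : X H 0` as an element of `H`, so that rewriting sees `act g`
        obtain ⟨g, rfl⟩ : ∃ g : H, g = η := ⟨_, rfl⟩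
        change act (TensorProduct.rid ℂ H (h ⊗ₜ counit (R := ℂ) g)) (x 0) =
          act h (x 0) * act g 1
        rw [TensorProduct.rid_tmul, map_smul, ← mul_one (act g 1),
          act_apply_one_mul hact_mul hact_one hact_hopf, mul_smul_comm, mul_one]
        rfl
      | add η η' hη hη' => simp only [map_add, hη, hη']
    · omega
  | succ n ih =>
    rcases i with _ | i
    · exact h_zero (n + 1) x ξ
    induction ξ using X.induction_on with
    | zero => simp only [map_zero]
    | tmul h η =>
      change act h (x 0) * evA H A act n (Fin.tail x) (sX H i n η) = _
      rw [ih i (by omega), show (⟨i + 1, by omega⟩ : Fin (n + 3)) = Fin.succ ⟨i, by omega⟩ from rfl,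
        insertNth_succ_eq_cons]
      rfl
    | add η η' hη hη' => simp only [map_add, hη, hη']

end Evaluation

section Gamma
open Coalgebra

variable {H A act} {tr : A →ₗ[ℂ] ℂ}

theorem gammaMap_apply (n : ℕ) (ξ : X H n) (x : Fin (n + 2) → A) :
    gammaMap H A act tr n ξ x = tr (x 0 * evA H A act n (Fin.tail x) ξ) := rfl

theorem gammaMap_cons (n : ℕ) (ξ : X H n) (a : A) (x : Fin (n + 1) → A) :
    gammaMap H A act tr n ξ (Fin.cons a x) = tr (a * evA H A act n x ξ) := rfl

theorem gammaMap_dX (hact_one : act 1 = LinearMap.id)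
    (hact_hopf : ∀ (h : H) (a b : A),
      act h (a * b) = TensorProduct.lift
        ((LinearMap.mul ℂ A).compl₁₂ (act.flip a) (act.flip b)) (Coalgebra.comul (R := ℂ) h))
    (htrace : ∀ a b : A, tr (a * b) = tr (b * a))
    (n i : ℕ) (hi : i ≤ n + 2) (ξ : X H n) :
    gammaMap H A act tr (n + 1) (dX H i n ξ) = dF A (n + 1) i (gammaMap H A act tr n ξ) := by
  funext x
  rcases Nat.lt_or_ge (n + 1) i with hlast | hle
  · obtain rfl : i = n + 2 := by omega
    rw [dF_succ, gammaMap_apply, dX_last, evA_appOne hact_one, gammaMap_cons,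
      Fin.tail_init_eq_init_tail, ← mul_assoc, htrace, ← mul_assoc]
    rfl
  rw [dF_of_le hle]
  cases i with
  | zero =>
    rw [gammaMap_apply, gammaMap_apply, evA_dX_zero hact_one, mergeAt_zero_apply_zero,
      tail_mergeAt_zero, mul_assoc]
    rfl
  | succ m =>
    rw [gammaMap_apply, evA_dX_succ hact_hopf n m (by omega), mergeAt_succ, gammaMap_cons]

theorem gammaMap_sX (hact_mul : ∀ h₁ h₂ : H, act (h₁ * h₂) = act h₁ ∘ₗ act h₂)
    (hact_one : act 1 = LinearMap.id)
    (hact_hopf : ∀ (h : H) (a b : A),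
      act h (a * b) = TensorProduct.lift
        ((LinearMap.mul ℂ A).compl₁₂ (act.flip a) (act.flip b)) (Coalgebra.comul (R := ℂ) h))
    (n i : ℕ) (hi : i ≤ n + 1) (ξ : X H (n + 1)) :
    gammaMap H A act tr n (sX H i n ξ) = sF A (n + 1) i (gammaMap H A act tr (n + 1) ξ) := by
  funext x
  rw [sF_eq_insertNth hi, gammaMap_apply, evA_sX hact_mul hact_one hact_hopf n i hi,
    show (⟨i + 1, by omega⟩ : Fin (n + 3)) = Fin.succ ⟨i, by omega⟩ from rfl,
    insertNth_succ_eq_cons, gammaMap_cons]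

theorem gammaMap_tauX (hact_mul : ∀ h₁ h₂ : H, act (h₁ * h₂) = act h₁ ∘ₗ act h₂)
    (hact_one : act 1 = LinearMap.id)
    (hact_hopf : ∀ (h : H) (a b : A),
      act h (a * b) = TensorProduct.lift
        ((LinearMap.mul ℂ A).compl₁₂ (act.flip a) (act.flip b)) (Coalgebra.comul (R := ℂ) h))
    (htrace : ∀ a b : A, tr (a * b) = tr (b * a)) (δ : H →ₐ[ℂ] ℂ)
    (hinvariant : ∀ (h : H) (a b : A),
      tr (act h a * b) = tr (a * act (twistedAntipode H δ h) b))
    (n : ℕ) (ξ : X H n) :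
    gammaMap H A act tr n (tauX H δ n ξ) = tF A (n + 1) (gammaMap H A act tr n ξ) := by
  funext x
  rw [tF_eq_cons_init, gammaMap_cons]
  cases n with
  | zero => exact (hinvariant ξ (x 0) (x 1)).symm.trans (htrace _ _)
  | succ n =>
    induction ξ using X.induction_on with
    | zero => simp only [map_zero, Pi.zero_apply, mul_zero]
    | tmul h η =>
      have htau : tauX H δ (n + 1) (h ⊗ₜ η) =
          Δiter H (n + 1) (twistedAntipode H δ h) * appOne H n η := rfl
      rw [htau, gammaMap_apply, evA_Δiter_mul hact_mul hact_hopf, evA_appOne hact_one,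
        ← hinvariant, ← mul_assoc, htrace, evA_tmul, Fin.tail_init_eq_init_tail]
      rfl
    | add η η' hη hη' => simp only [map_add, Pi.add_apply, mul_add, hη, hη']

end Gamma

/-- **Proposition 2, cochain level.** Let the Hopf algebra `H` act on the
unital `ℂ`-algebra `A` (via `act`, satisfying `h¹(h²(a)) = (h¹h²)(a)`, `1(a) = a` and
`h(ab) = ∑ h₍₁₎(a) h₍₂₎(b)`), and let `tr` be a `δ`-invariant trace on `A`.  Then the
characteristic map `γ` intertwines the cyclic structures of `{H^{⊗n}}` and of the
cyclic module `{Cⁿ(A)}` of multilinear forms on `A`. -/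
theorem gamma_intertwines (δ : H →ₐ[ℂ] ℂ) (tr : A →ₗ[ℂ] ℂ)
    (hact_mul : ∀ h₁ h₂ : H, act (h₁ * h₂) = act h₁ ∘ₗ act h₂)
    (hact_one : act 1 = LinearMap.id)
    (hact_hopf : ∀ (h : H) (a b : A),
      act h (a * b) = TensorProduct.lift
        ((LinearMap.mul ℂ A).compl₁₂ (act.flip a) (act.flip b)) (Coalgebra.comul (R := ℂ) h))
    (htrace : ∀ a b : A, tr (a * b) = tr (b * a))
    (hinvariant : ∀ (h : H) (a b : A),
      tr (act h a * b) = tr (a * act (twistedAntipode H δ h) b)) :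
    -- γ ∘ δᵢ = δᵢ ∘ γ
    (∀ (n i : ℕ), i ≤ n + 2 → ∀ ξ : X H n,
        gammaMap H A act tr (n + 1) (dX H i n ξ) =
          dF A (n + 1) i (gammaMap H A act tr n ξ)) ∧
    -- γ ∘ σᵢ = σᵢ ∘ γ
    (∀ (n i : ℕ), i ≤ n + 1 → ∀ ξ : X H (n + 1),
        gammaMap H A act tr n (sX H i n ξ) =
          sF A (n + 1) i (gammaMap H A act tr (n + 1) ξ)) ∧
    -- γ ∘ τₙ = τₙ ∘ γ
    (∀ (n : ℕ) (ξ : X H n),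
        gammaMap H A act tr n (tauX H δ n ξ) =
          tF A (n + 1) (gammaMap H A act tr n ξ)) :=
  ⟨gammaMap_dX hact_one hact_hopf htrace, gammaMap_sX hact_mul hact_one hact_hopf,
    gammaMap_tauX hact_mul hact_one hact_hopf htrace δ hinvariant⟩
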